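/- For the dispersion relation ω(ξ) = -ξ|ξ| on the real line, the resonance function Ω(ξ₁,ξ₂) = -ω(ξ₁+ξ₂) + ω(ξ₁) + ω(ξ₂) satisfies |Ω(ξ₁,ξ₂)| = 2·min(|ξ₁|,|ξ₂|,|ξ₁+ξ₂|)·med(|ξ₁|,|ξ₂|,|ξ₁+ξ₂|) for all real ξ₁, ξ₂, where med denotes the median of the three numbers. -/
import Mathlib


noncomputable section

/-- Benjamin–Ono dispersion relation. -/
def ω (ξ : ℝ) : ℝ := -ξ * |ξ|

/-- Resonance function. -/
def Ωres (ξ₁ ξ₂ : ℝ) : ℝ := -ω (ξ₁ + ξ₂) + ω ξ₁ + ω ξ₂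

def min3 (a b c : ℝ) : ℝ := min a (min b c)
def max3 (a b c : ℝ) : ℝ := max a (max b c)
def med3 (a b c : ℝ) : ℝ := a + b + c - max3 a b c - min3 a b c

private lemma omega_neg (x : ℝ) : ω (-x) = -ω x := by
  simp [ω, abs_neg]

/-- RHS as a function. -/
private def G (a b c : ℝ) : ℝ := 2 * min3 a b c * med3 a b c

private lemma min3_rot (a b c : ℝ) : min3 a b c = min3 b c a := by
  simp [min3, min_comm, min_assoc, min_left_comm]

private lemma max3_rot (a b c : ℝ) : max3 a b c = max3 b c a := by
  simp [max3, max_comm, max_assoc, max_left_comm]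

private lemma min3_swap (a b c : ℝ) : min3 a b c = min3 a c b := by
  simp [min3, min_comm, min_assoc, min_left_comm]

private lemma max3_swap (a b c : ℝ) : max3 a b c = max3 a c b := by
  simp [max3, max_comm, max_assoc, max_left_comm]

private lemma G_rot (a b c : ℝ) : G a b c = G b c a := by
  unfold G med3
  rw [min3_rot a b c, max3_rot a b c]; ring

private lemma G_swap (a b c : ℝ) : G a b c = G a c b := by
  unfold G med3
  rw [min3_swap a b c, max3_swap a b c]; ring

private lemma key (a b : ℝ) (ha : 0 ≤ a) (hb : 0 ≤ b) :
    |Ωres a b| = G (|a|) (|b|) (|a + b|) := by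
  simp only [Ωres, ω, G, min3, max3, med3]
  rw [abs_of_nonneg ha, abs_of_nonneg hb, abs_of_nonneg (add_nonneg ha hb),
    abs_of_nonneg (by nlinarith : (0:ℝ) ≤ -(-(a+b)*(a+b)) + -a*a + -b*b)]
  rw [min_def, min_def, max_def, max_def]
  split_ifs <;> nlinarith

theorem resonance_identity (ξ₁ ξ₂ : ℝ) :
    |Ωres ξ₁ ξ₂| =
      2 * min3 (|ξ₁|) (|ξ₂|) (|ξ₁ + ξ₂|) * med3 (|ξ₁|) (|ξ₂|) (|ξ₁ + ξ₂|) := by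
  show |Ωres ξ₁ ξ₂| = G (|ξ₁|) (|ξ₂|) (|ξ₁ + ξ₂|)
  rcases le_total 0 ξ₁ with h1 | h1 <;> rcases le_total 0 ξ₂ with h2 | h2
  · exact key ξ₁ ξ₂ h1 h2
  · -- ξ₁ ≥ 0, ξ₂ ≤ 0
    rcases le_total 0 (ξ₁ + ξ₂) with hs | hs
    · -- use (-ξ₂, ξ₁+ξ₂), sum = ξ₁
      have h := key (-ξ₂) (ξ₁ + ξ₂) (by linarith) hs
      have e1 : Ωres (-ξ₂) (ξ₁ + ξ₂) = -Ωres ξ₁ ξ₂ := by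
        simp only [Ωres]
        have : -ξ₂ + (ξ₁ + ξ₂) = ξ₁ := by ring
        rw [this, omega_neg]; ring
      have e2 : (-ξ₂) + (ξ₁ + ξ₂) = ξ₁ := by ring
      rw [e1, abs_neg, e2, abs_neg] at h
      rw [h, G_rot, G_rot]
    · -- use (ξ₁, -(ξ₁+ξ₂)), sum = -ξ₂
      have h := key ξ₁ (-(ξ₁ + ξ₂)) h1 (by linarith)
      have e1 : Ωres ξ₁ (-(ξ₁ + ξ₂)) = Ωres ξ₁ ξ₂ := by
        simp only [Ωres]
        have : ξ₁ + -(ξ₁ + ξ₂) = -ξ₂ := by ring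
        rw [this, omega_neg, omega_neg]; ring
      have e2 : ξ₁ + -(ξ₁ + ξ₂) = -ξ₂ := by ring
      rw [e1, e2, abs_neg, abs_neg] at h
      rw [h, G_swap]
  · -- ξ₁ ≤ 0, ξ₂ ≥ 0
    rcases le_total 0 (ξ₁ + ξ₂) with hs | hs
    · -- use (-ξ₁, ξ₁+ξ₂), sum = ξ₂
      have h := key (-ξ₁) (ξ₁ + ξ₂) (by linarith) hs
      have e1 : Ωres (-ξ₁) (ξ₁ + ξ₂) = -Ωres ξ₁ ξ₂ := by
        simp only [Ωres]
        have : -ξ₁ + (ξ₁ + ξ₂) = ξ₂ := by ring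
        rw [this, omega_neg]; ring
      have e2 : (-ξ₁) + (ξ₁ + ξ₂) = ξ₂ := by ring
      rw [e1, abs_neg, e2, abs_neg] at h
      rw [h, G_swap]
    · -- use (ξ₂, -(ξ₁+ξ₂)), sum = -ξ₁
      have h := key ξ₂ (-(ξ₁ + ξ₂)) h2 (by linarith)
      have e1 : Ωres ξ₂ (-(ξ₁ + ξ₂)) = Ωres ξ₁ ξ₂ := by
        simp only [Ωres]
        have : ξ₂ + -(ξ₁ + ξ₂) = -ξ₁ := by ring
        rw [this, omega_neg, omega_neg]; ring
      have e2 : ξ₂ + -(ξ₁ + ξ₂) = -ξ₁ := by ring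
      rw [e1, e2, abs_neg, abs_neg] at h
      rw [h, G_rot, G_rot]
  · -- both ≤ 0
    have h := key (-ξ₁) (-ξ₂) (by linarith) (by linarith)
    have e1 : Ωres (-ξ₁) (-ξ₂) = -Ωres ξ₁ ξ₂ := by
      simp only [Ωres]
      have : -ξ₁ + -ξ₂ = -(ξ₁ + ξ₂) := by ring
      rw [this, omega_neg, omega_neg, omega_neg]; ring
    have e2 : (-ξ₁) + (-ξ₂) = -(ξ₁ + ξ₂) := by ring
    rw [e1, abs_neg, e2, abs_neg, abs_neg, abs_neg] at h
    exact h
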